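/- arXiv:2210.12363 — 5 statements merged into one kernel-verified Lean document; each statement's English description precedes it below -/
import Mathlib

section
/- Let k : ℝ^d → ℝ be a kernel and let ρ be any map from functions ℝ^d → ℝ² to functions ℝ^d → ℝ^e that is translation equivariant, i.e. ρ(T*_τ h) = T*_τ(ρ(h)) for every function h : ℝ^d → ℝ² and every τ ∈ ℝ^d. Then the ConvDeepsets map Φ(D) = ρ(E(D)) is translation equivariant on datasets: Φ(T_τ D) = T*_τ(Φ(D)) for every dataset D and every τ ∈ ℝ^d. -/
open scoped BigOperators

/-- The functional representation `E(D) : ℝ^d → ℝ²` of a dataset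
`D = ((x_1,y_1),…,(x_N,y_N))` with kernel `k`: first component is the density
channel, second is the data channel. -/
noncomputable def funcRep {d N : ℕ} (k : EuclideanSpace ℝ (Fin d) → ℝ)
    (X : Fin N → EuclideanSpace ℝ (Fin d)) (Y : Fin N → ℝ) :
    EuclideanSpace ℝ (Fin d) → ℝ × ℝ :=
  fun t => (∑ n, k (t - X n), (∑ n, Y n * k (t - X n)) / (∑ n, k (t - X n)))

/-- If `ρ` is translation equivariant on functions, then the
ConvDeepsets map `Φ(D) = ρ(E(D))` is translation equivariant on datasets:
`Φ(T_τ D) = T*_τ (Φ(D))`. -/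
theorem convDeepsets_translation_equivariant
    {d e : ℕ}
    (k : EuclideanSpace ℝ (Fin d) → ℝ)
    (ρ : (EuclideanSpace ℝ (Fin d) → ℝ × ℝ) →
      (EuclideanSpace ℝ (Fin d) → EuclideanSpace ℝ (Fin e)))
    (hρ : ∀ (h : EuclideanSpace ℝ (Fin d) → ℝ × ℝ) (τ : EuclideanSpace ℝ (Fin d)),
      ρ (fun t => h (t - τ)) = fun t => ρ h (t - τ)) :
    ∀ {N : ℕ} (X : Fin N → EuclideanSpace ℝ (Fin d)) (Y : Fin N → ℝ)
      (τ : EuclideanSpace ℝ (Fin d)),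
      ρ (funcRep k (fun n => X n + τ) Y) = fun t => ρ (funcRep k X Y) (t - τ) := by
  intro N X Y τ
  have hE : funcRep k (fun n => X n + τ) Y = fun t => funcRep k X Y (t - τ) := by
    funext t
    simp only [funcRep, sub_add_eq_sub_sub, sub_right_comm]
  rw [hE, hρ]
end

section
/- Let l ∈ ℕ, l ≥ 1, and let w_1,…,w_l, s_1,…,s_l, b_1,…,b_l be mutually independent random variables where each w_i is standard normal on ℝ, each s_i has distribution μ (a probability measure on ℝ^d), and each b_i is uniform on [0,2π]. Define φ(x) = √(2/l)·Σ_{i=1}^l w_i cos(2π⟨s_i, x⟩ + b_i) and k(τ) = ∫ cos(2π⟨s,τ⟩) dμ(s). Then for all x, y ∈ ℝ^d, E[φ(x)·φ(y)] = k(x − y). -/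
open scoped BigOperators RealInnerProductSpace NNReal ENNReal
open MeasureTheory Real ProbabilityTheory

namespace RFF

/-! ### Standard Gaussian facts -/

lemma integral_gauss_eq (g : ℝ → ℝ) :
    ∫ t, g t ∂(gaussianReal 0 1) = ∫ t, gaussianPDFReal 0 1 t * g t := by
  rw [gaussianReal_of_var_ne_zero 0 one_ne_zero, gaussianPDF_def]
  rw [show (fun x => ENNReal.ofReal (gaussianPDFReal 0 1 x))
      = fun x => ((Real.toNNReal (gaussianPDFReal 0 1 x) : ℝ≥0) : ℝ≥0∞) from rfl]
  rw [integral_withDensity_eq_integral_smul (measurable_gaussianPDFReal 0 1).real_toNNReal g]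
  congr 1; funext t
  simp [NNReal.smul_def, Real.coe_toNNReal _ (gaussianPDFReal_nonneg 0 1 t)]

lemma integrable_gauss (g : ℝ → ℝ)
    (h : Integrable (fun t => gaussianPDFReal 0 1 t * g t)) :
    Integrable g (gaussianReal 0 1) := by
  rw [gaussianReal_of_var_ne_zero 0 one_ne_zero, gaussianPDF_def]
  rw [show (fun x => ENNReal.ofReal (gaussianPDFReal 0 1 x))
      = fun x => ((Real.toNNReal (gaussianPDFReal 0 1 x) : ℝ≥0) : ℝ≥0∞) from rfl]
  rw [integrable_withDensity_iff_integrable_smul (measurable_gaussianPDFReal 0 1).real_toNNReal]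
  refine h.congr (Filter.Eventually.of_forall fun t => ?_)
  simp [NNReal.smul_def, Real.coe_toNNReal _ (gaussianPDFReal_nonneg 0 1 t)]

lemma pdf_even (t : ℝ) : gaussianPDFReal 0 1 (-t) = gaussianPDFReal 0 1 t := by
  simp only [gaussianPDFReal, NNReal.coe_one, mul_one, sub_zero, neg_sq]

lemma integral_pdf_id : ∫ t : ℝ, gaussianPDFReal 0 1 t * t = 0 := by
  have h := integral_neg_eq_self (fun t : ℝ => gaussianPDFReal 0 1 t * t) volume
  simp only [pdf_even, mul_neg] at h
  have h2 : ∫ t : ℝ, -(gaussianPDFReal 0 1 t * t) = -∫ t : ℝ, gaussianPDFReal 0 1 t * t :=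
    integral_neg _
  rw [h2] at h
  linarith

lemma integral_sq_exp : ∫ t : ℝ, t ^ 2 * rexp (-(1/2) * t ^ 2) = Real.sqrt (2 * π) := by
  have habs : (fun t : ℝ => t ^ 2 * rexp (-(1/2) * t ^ 2))
      = fun t : ℝ => (fun u : ℝ => u ^ 2 * rexp (-(1/2) * u ^ 2)) |t| := by
    funext t; simp [sq_abs]
  rw [habs, integral_comp_abs (f := fun u : ℝ => u ^ 2 * rexp (-(1/2) * u ^ 2))]
  have hIoi : ∫ t in Set.Ioi (0:ℝ), t ^ 2 * rexp (-(1/2) * t ^ 2)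
      = ∫ t in Set.Ioi (0:ℝ), t ^ (2:ℝ) * rexp (-(1/2) * t ^ (2:ℝ)) := by
    refine setIntegral_congr_fun measurableSet_Ioi (fun t ht => ?_)
    rw [show ((2:ℝ) = ((2:ℕ):ℝ)) by norm_num, Real.rpow_natCast]
  rw [hIoi, integral_rpow_mul_exp_neg_mul_rpow (by norm_num) (by norm_num) (by norm_num)]
  have hgamma : Real.Gamma (((2:ℝ) + 1) / 2) = Real.sqrt π / 2 := by
    rw [show ((2:ℝ) + 1) / 2 = 1/2 + 1 by norm_num, Real.Gamma_add_one (by norm_num),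
      Real.Gamma_one_half_eq]
    ring
  rw [hgamma]
  have hpow : ((1:ℝ)/2) ^ (-((2:ℝ) + 1) / 2) = 2 * Real.sqrt 2 := by
    rw [show ((1:ℝ)/2) = 2⁻¹ by norm_num,
      Real.inv_rpow (by norm_num), ← Real.rpow_neg (by norm_num), neg_div, neg_neg,
      show ((2:ℝ) + 1) / 2 = 1 + 1/2 by norm_num,
      Real.rpow_add (by norm_num), Real.rpow_one, ← Real.sqrt_eq_rpow]
  rw [hpow, Real.sqrt_mul (by norm_num) π]
  ring

lemma integral_pdf_sq : ∫ t : ℝ, gaussianPDFReal 0 1 t * t ^ 2 = 1 := by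
  have hpdf : (fun t : ℝ => gaussianPDFReal 0 1 t * t ^ 2)
      = fun t : ℝ => (Real.sqrt (2 * π))⁻¹ * (t ^ 2 * rexp (-(1/2) * t ^ 2)) := by
    funext t
    simp only [gaussianPDFReal, NNReal.coe_one, mul_one, sub_zero]
    rw [show -t ^ 2 / 2 = -(1/2) * t ^ 2 by ring]
    ring
  rw [hpdf, integral_const_mul, integral_sq_exp]
  rw [inv_mul_cancel₀]
  positivity

lemma integrable_pdf_id : Integrable (fun t : ℝ => gaussianPDFReal 0 1 t * t) := by
  have h : Integrable (fun t : ℝ => t * rexp (-(1/2) * t ^ 2)) :=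
    integrable_mul_exp_neg_mul_sq (by norm_num)
  have h2 := (h.const_mul ((Real.sqrt (2 * π))⁻¹))
  refine h2.congr (Filter.Eventually.of_forall fun t => ?_)
  simp only [gaussianPDFReal, NNReal.coe_one, mul_one, sub_zero]
  rw [show -t ^ 2 / 2 = -(1/2) * t ^ 2 by ring]
  ring

lemma integrable_pdf_sq : Integrable (fun t : ℝ => gaussianPDFReal 0 1 t * t ^ 2) := by
  have h0 : Integrable (fun t : ℝ => t ^ (2:ℝ) * rexp (-(1/2) * t ^ 2)) :=
    integrable_rpow_mul_exp_neg_mul_sq (by norm_num) (by norm_num)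
  have h : Integrable (fun t : ℝ => t ^ 2 * rexp (-(1/2) * t ^ 2)) := by
    refine h0.congr (Filter.Eventually.of_forall fun t => ?_)
    norm_num [Real.rpow_natCast]
  have h2 := (h.const_mul ((Real.sqrt (2 * π))⁻¹))
  refine h2.congr (Filter.Eventually.of_forall fun t => ?_)
  simp only [gaussianPDFReal, NNReal.coe_one, mul_one, sub_zero]
  rw [show -t ^ 2 / 2 = -(1/2) * t ^ 2 by ring]
  ring

lemma integral_id_gauss : ∫ t, t ∂(gaussianReal 0 1) = 0 := by
  rw [integral_gauss_eq, integral_pdf_id]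

lemma integral_sq_gauss : ∫ t, t ^ 2 ∂(gaussianReal 0 1) = 1 := by
  rw [integral_gauss_eq, integral_pdf_sq]

lemma integrable_id_gauss : Integrable (fun t : ℝ => t) (gaussianReal 0 1) :=
  integrable_gauss _ integrable_pdf_id

lemma integrable_sq_gauss : Integrable (fun t : ℝ => t ^ 2) (gaussianReal 0 1) :=
  integrable_gauss _ integrable_pdf_sq

/-! ### The uniform distribution on `[0, 2π]` -/

noncomputable def unif : Measure ℝ :=
  (volume (Set.Icc (0:ℝ) (2 * π)))⁻¹ • volume.restrict (Set.Icc 0 (2 * π))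

lemma hvol : volume (Set.Icc (0:ℝ) (2 * π)) = ENNReal.ofReal (2 * π) := by
  rw [Real.volume_Icc, sub_zero]

instance : IsProbabilityMeasure unif := by
  constructor
  simp only [unif, Measure.smul_apply, Measure.restrict_apply MeasurableSet.univ,
    Set.univ_inter, smul_eq_mul]
  rw [hvol]
  exact ENNReal.inv_mul_cancel (by simp [Real.pi_pos]) ENNReal.ofReal_ne_top

lemma cos_prod (u v : ℝ) :
    Real.cos u * Real.cos v = (Real.cos (u - v) + Real.cos (u + v)) / 2 := by
  rw [Real.cos_sub, Real.cos_add]; ring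

lemma unif_integral (A B : ℝ) :
    ∫ t, Real.cos (A + t) * Real.cos (B + t) ∂unif = Real.cos (A - B) / 2 := by
  rw [unif, integral_smul_measure, hvol]
  have h2π : (0:ℝ) ≤ 2 * π := by positivity
  have hIcc : ∫ t in Set.Icc (0:ℝ) (2 * π), Real.cos (A + t) * Real.cos (B + t)
      = ∫ t in (0:ℝ)..(2 * π), Real.cos (A + t) * Real.cos (B + t) := by
    rw [intervalIntegral.integral_of_le h2π, integral_Icc_eq_integral_Ioc]
  have hint : ∫ t in (0:ℝ)..(2 * π), Real.cos (A + t) * Real.cos (B + t)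
      = π * Real.cos (A - B) := by
    have hderiv : ∀ t ∈ Set.uIcc (0:ℝ) (2 * π), HasDerivAt
        (fun t => Real.cos (A - B) * t / 2 + Real.sin (A + B + 2 * t) / 4)
        (Real.cos (A + t) * Real.cos (B + t)) t := by
      intro t _
      have h1 : HasDerivAt (fun t : ℝ => A + B + 2 * t) 2 t := by
        simpa using ((hasDerivAt_id t).const_mul (2:ℝ)).const_add (A + B)
      have h2 := (h1.sin).div_const 4
      have h3 : HasDerivAt (fun t : ℝ => Real.cos (A - B) * t / 2)
          (Real.cos (A - B) / 2) t := by
        simpa using ((hasDerivAt_id t).const_mul (Real.cos (A - B))).div_const 2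
      have h4 := h3.add h2
      have e : Real.cos (A + t) * Real.cos (B + t)
          = Real.cos (A - B) / 2 + Real.cos (A + B + 2 * t) * 2 / 4 := by
       rw [cos_prod, show A + t - (B + t) = A - B by ring,
        show A + t + (B + t) = A + B + 2 * t by ring]
       ring
      rw [e]; exact h4
    rw [intervalIntegral.integral_eq_sub_of_hasDerivAt hderiv
      (by apply Continuous.intervalIntegrable; fun_prop)]
    have hsin : Real.sin (A + B + 2 * (2 * π)) = Real.sin (A + B) := by
      rw [show A + B + 2 * (2 * π) = A + B + 2 * π + 2 * π by ring,
        Real.sin_add_two_pi, Real.sin_add_two_pi]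
    simp only [hsin, mul_zero, add_zero]
    ring
  rw [hIcc, hint, smul_eq_mul, ENNReal.toReal_inv, ENNReal.toReal_ofReal h2π]
  have hπ : π ≠ 0 := Real.pi_ne_zero
  field_simp

/-! ### The single-feature functions -/

variable {d : ℕ}

noncomputable def F (x : EuclideanSpace ℝ (Fin d)) :
    ℝ × EuclideanSpace ℝ (Fin d) × ℝ → ℝ :=
  fun z => z.1 * Real.cos (2 * π * ⟪z.2.1, x⟫ + z.2.2)

noncomputable def C (x : EuclideanSpace ℝ (Fin d)) :
    EuclideanSpace ℝ (Fin d) × ℝ → ℝ :=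
  fun p => Real.cos (2 * π * ⟪p.1, x⟫ + p.2)

lemma continuous_C (x : EuclideanSpace ℝ (Fin d)) : Continuous (C x) := by
  apply Real.continuous_cos.comp
  exact (continuous_const.mul (continuous_fst.inner continuous_const)).add continuous_snd

lemma continuous_F (x : EuclideanSpace ℝ (Fin d)) : Continuous (F x) :=
  continuous_fst.mul ((continuous_C x).comp continuous_snd)

noncomputable def nu (μ : Measure (EuclideanSpace ℝ (Fin d))) :
    Measure (ℝ × EuclideanSpace ℝ (Fin d) × ℝ) :=
  (gaussianReal 0 1).prod (μ.prod unif)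

instance (μ : Measure (EuclideanSpace ℝ (Fin d))) [IsProbabilityMeasure μ] :
    IsProbabilityMeasure (nu μ) := by
  unfold nu; infer_instance

variable (μ : Measure (EuclideanSpace ℝ (Fin d))) [IsProbabilityMeasure μ]

lemma integrable_C (x : EuclideanSpace ℝ (Fin d)) : Integrable (C x) (μ.prod unif) := by
  refine ⟨(continuous_C x).aestronglyMeasurable, ?_⟩
  refine HasFiniteIntegral.of_bounded (C := 1) ?_
  filter_upwards with p
  simpa [C] using Real.abs_cos_le_one _

lemma integrable_C_mul (x y : EuclideanSpace ℝ (Fin d)) :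
    Integrable (fun p => C x p * C y p) (μ.prod unif) := by
  refine ⟨((continuous_C x).mul (continuous_C y)).aestronglyMeasurable, ?_⟩
  refine HasFiniteIntegral.of_bounded (C := 1) ?_
  filter_upwards with p
  rw [Real.norm_eq_abs, abs_mul]
  calc |C x p| * |C y p| ≤ 1 * 1 :=
      mul_le_mul (Real.abs_cos_le_one _) (Real.abs_cos_le_one _) (abs_nonneg _) zero_le_one
  _ = 1 := one_mul 1

lemma integrable_F (x : EuclideanSpace ℝ (Fin d)) : Integrable (F x) (nu μ) :=
  integrable_id_gauss.mul_prod (integrable_C μ x)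

lemma integrable_F_mul (x y : EuclideanSpace ℝ (Fin d)) :
    Integrable (fun z => F x z * F y z) (nu μ) := by
  have h := integrable_sq_gauss.mul_prod (integrable_C_mul μ x y)
  refine h.congr (Filter.Eventually.of_forall fun z => ?_)
  simp only [F, C]
  ring

lemma integral_F (x : EuclideanSpace ℝ (Fin d)) : ∫ z, F x z ∂(nu μ) = 0 := by
  rw [show F x = fun z : ℝ × EuclideanSpace ℝ (Fin d) × ℝ => z.1 * C x z.2 from rfl]
  rw [nu, integral_prod_mul (fun t : ℝ => t) (C x), integral_id_gauss, zero_mul]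

lemma integral_F_mul (x y : EuclideanSpace ℝ (Fin d)) :
    ∫ z, F x z * F y z ∂(nu μ)
      = (∫ s', Real.cos (2 * π * ⟪s', x - y⟫) ∂μ) / 2 := by
  have heq : (fun z : ℝ × EuclideanSpace ℝ (Fin d) × ℝ => F x z * F y z)
      = fun z => z.1 ^ 2 * (C x z.2 * C y z.2) := by
    funext z; simp only [F, C]; ring
  rw [heq, nu, integral_prod_mul (fun t : ℝ => t ^ 2) (fun p => C x p * C y p),
    integral_sq_gauss, one_mul]
  rw [integral_prod _ (integrable_C_mul μ x y)]
  have hinner : ∀ s' : EuclideanSpace ℝ (Fin d),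
      (∫ t, C x (s', t) * C y (s', t) ∂unif)
        = Real.cos (2 * π * ⟪s', x - y⟫) / 2 := by
    intro s'
    have := unif_integral (2 * π * ⟪s', x⟫) (2 * π * ⟪s', y⟫)
    simp only [C]
    rw [this]
    congr 2
    rw [inner_sub_right]
    ring
  simp_rw [hinner]
  rw [integral_div]

end RFF

/-- unbiasedness of the random Fourier feature approximation.
If `w_i ~ N(0,1)`, `s_i ~ μ`, `b_i ~ U[0,2π]` are mutually independent (the joint
law of `(w_i, s_i, b_i)_{i<l}` is the product of the marginals), then the random
function `φ(x) = √(2/l) Σ_i w_i cos(2π⟨s_i,x⟩ + b_i)` satisfies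
`E[φ(x) φ(y)] = k(x − y)` where `k(τ) = ∫ cos(2π⟨s,τ⟩) dμ(s)`. -/
theorem rff_unbiased
    {Ω : Type*} [MeasurableSpace Ω] (P : Measure Ω) [IsProbabilityMeasure P]
    {d : ℕ} (μ : Measure (EuclideanSpace ℝ (Fin d))) [IsProbabilityMeasure μ]
    (l : ℕ) (hl : 1 ≤ l)
    (w : Fin l → Ω → ℝ) (s : Fin l → Ω → EuclideanSpace ℝ (Fin d))
    (b : Fin l → Ω → ℝ)
    (hjoint : Measure.map (fun ω => fun i : Fin l => (w i ω, s i ω, b i ω)) P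
      = Measure.pi (fun _ : Fin l =>
          (gaussianReal 0 1).prod
            (μ.prod
              ((volume (Set.Icc (0:ℝ) (2 * π)))⁻¹
                • volume.restrict (Set.Icc 0 (2 * π))))))
    (φ : Ω → EuclideanSpace ℝ (Fin d) → ℝ)
    (hφ : ∀ ω x, φ ω x
      = Real.sqrt (2 / l) * ∑ i, w i ω * Real.cos (2 * π * ⟪s i ω, x⟫ + b i ω))
    (x y : EuclideanSpace ℝ (Fin d)) :
    ∫ ω, φ ω x * φ ω y ∂P = ∫ s', Real.cos (2 * π * ⟪s', x - y⟫) ∂μ := by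
  classical
  have hjoint' : Measure.map (fun ω => fun i : Fin l => (w i ω, s i ω, b i ω)) P
      = Measure.pi (fun _ : Fin l => RFF.nu μ) := hjoint
  set T : Ω → (Fin l → ℝ × EuclideanSpace ℝ (Fin d) × ℝ) :=
    fun ω i => (w i ω, s i ω, b i ω) with hTdef
  have hTae : AEMeasurable T P := by
    by_contra h
    rw [Measure.map_of_not_aemeasurable h] at hjoint'
    have h0 : (0:ℝ≥0∞) = 1 := by
      calc (0:ℝ≥0∞)
          = (0 : Measure (Fin l → ℝ × EuclideanSpace ℝ (Fin d) × ℝ)) Set.univ := by simp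
        _ = Measure.pi (fun _ : Fin l => RFF.nu μ) Set.univ := by rw [hjoint']
        _ = 1 := measure_univ
    exact zero_ne_one h0
  set G : (Fin l → ℝ × EuclideanSpace ℝ (Fin d) × ℝ) → ℝ := fun z =>
    (Real.sqrt (2 / l) * ∑ i, RFF.F x (z i)) * (Real.sqrt (2 / l) * ∑ i, RFF.F y (z i))
    with hGdef
  have hGcont : Continuous G := by
    apply Continuous.mul <;>
    exact continuous_const.mul (continuous_finset_sum _ fun i _ =>
      (RFF.continuous_F _).comp (continuous_apply i))
  have step1 : ∫ ω, φ ω x * φ ω y ∂P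
      = ∫ z, G z ∂(Measure.pi fun _ : Fin l => RFF.nu μ) := by
    rw [← hjoint', integral_map hTae hGcont.aestronglyMeasurable]
    refine integral_congr_ae (Filter.Eventually.of_forall fun ω => ?_)
    show φ ω x * φ ω y = G (T ω)
    rw [hφ, hφ]
    rfl
  rw [step1]
  have hl0 : (0:ℝ) < (l:ℝ) := by exact_mod_cast hl
  have hGeq : ∀ z, G z = (2 / (l:ℝ)) * ∑ i, ∑ j, RFF.F x (z i) * RFF.F y (z j) := by
    intro z
    rw [hGdef]
    calc (Real.sqrt (2 / l) * ∑ i, RFF.F x (z i))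
          * (Real.sqrt (2 / l) * ∑ i, RFF.F y (z i))
        = (Real.sqrt (2 / l) * Real.sqrt (2 / l))
          * ((∑ i, RFF.F x (z i)) * (∑ j, RFF.F y (z j))) := by ring
      _ = (2 / (l:ℝ)) * ((∑ i, RFF.F x (z i)) * (∑ j, RFF.F y (z j))) := by
          rw [Real.mul_self_sqrt (by positivity)]
      _ = _ := by rw [Finset.sum_mul_sum]
  simp_rw [hGeq]
  letI : MeasureSpace (ℝ × EuclideanSpace ℝ (Fin d) × ℝ) := ⟨RFF.nu μ⟩
  haveI : IsProbabilityMeasure (volume : Measure (ℝ × EuclideanSpace ℝ (Fin d) × ℝ)) := by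
    change IsProbabilityMeasure (RFF.nu μ); infer_instance
  have hpi : (Measure.pi fun _ : Fin l => RFF.nu μ)
      = (volume : Measure (Fin l → ℝ × EuclideanSpace ℝ (Fin d) × ℝ)) := rfl
  rw [hpi]
  have hprod : ∀ (i j : Fin l) (z : Fin l → ℝ × EuclideanSpace ℝ (Fin d) × ℝ),
      RFF.F x (z i) * RFF.F y (z j)
        = ∏ k, ((if k = i then RFF.F x (z k) else 1) * (if k = j then RFF.F y (z k) else 1)) := by
    intro i j z
    rw [Finset.prod_mul_distrib,
      Finset.prod_ite_eq' Finset.univ i (fun k => RFF.F x (z k)),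
      Finset.prod_ite_eq' Finset.univ j (fun k => RFF.F y (z k))]
    simp
  -- integrability of each factor
  have hfac : ∀ (i j k : Fin l),
      Integrable (fun t : ℝ × EuclideanSpace ℝ (Fin d) × ℝ =>
        (if k = i then RFF.F x t else 1) * (if k = j then RFF.F y t else 1)) volume := by
    intro i j k
    rcases eq_or_ne k i with rfl | hki
    · rcases eq_or_ne k j with rfl | hkj
      · simp only [if_pos rfl]
        exact RFF.integrable_F_mul μ x y
      · simp only [if_pos rfl, if_neg hkj, mul_one]
        exact RFF.integrable_F μ x
    · rcases eq_or_ne k j with rfl | hkj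
      · simp only [if_neg hki, if_pos rfl, one_mul]
        exact RFF.integrable_F μ y
      · simp only [if_neg hki, if_neg hkj, mul_one]
        exact integrable_const 1
  have hintegrable : ∀ (i j : Fin l),
      Integrable (fun z : Fin l → ℝ × EuclideanSpace ℝ (Fin d) × ℝ =>
        RFF.F x (z i) * RFF.F y (z j)) volume := by
    intro i j
    have := Integrable.fintype_prod (𝕜 := ℝ)
      (f := fun k (t : ℝ × EuclideanSpace ℝ (Fin d) × ℝ) =>
        (if k = i then RFF.F x t else 1) * (if k = j then RFF.F y t else 1))
      (fun k => hfac i j k)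
    refine this.congr (Filter.Eventually.of_forall fun z => ?_)
    exact (hprod i j z).symm
  set K : ℝ := ∫ s', Real.cos (2 * π * ⟪s', x - y⟫) ∂μ with hK
  have hterm : ∀ i j : Fin l,
      (∫ z : Fin l → ℝ × EuclideanSpace ℝ (Fin d) × ℝ,
        RFF.F x (z i) * RFF.F y (z j)) = if i = j then K / 2 else 0 := by
    intro i j
    simp_rw [hprod i j]
    rw [show (volume : Measure (Fin l → ℝ × EuclideanSpace ℝ (Fin d) × ℝ))
        = Measure.pi (fun _ => volume) from rfl, integral_fintype_prod_eq_prod (𝕜 := ℝ)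
      (f := fun k (t : ℝ × EuclideanSpace ℝ (Fin d) × ℝ) =>
        (if k = i then RFF.F x t else 1) * (if k = j then RFF.F y t else 1))]
    by_cases hij : i = j
    · subst hij
      rw [if_pos rfl]
      have hval : ∀ k : Fin l,
          (∫ t : ℝ × EuclideanSpace ℝ (Fin d) × ℝ,
            (if k = i then RFF.F x t else 1) * (if k = i then RFF.F y t else 1))
          = if k = i then K / 2 else 1 := by
        intro k
        by_cases hk : k = i
        · simp only [hk, ite_true]
          rw [show (volume : Measure (ℝ × EuclideanSpace ℝ (Fin d) × ℝ)) = RFF.nu μ from rfl,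
            RFF.integral_F_mul μ x y, hK]
        · simp only [hk, ite_false, mul_one]
          simp
      rw [Finset.prod_congr rfl (fun k _ => hval k),
        Finset.prod_ite_eq' Finset.univ i (fun _ => K / 2)]
      simp
    · rw [if_neg hij]
      apply Finset.prod_eq_zero (Finset.mem_univ i)
      simp only [ite_true, if_neg (fun h => hij h), mul_one]
      rw [show (volume : Measure (ℝ × EuclideanSpace ℝ (Fin d) × ℝ)) = RFF.nu μ from rfl]
      simpa using RFF.integral_F μ x
  rw [integral_const_mul]
  rw [integral_finset_sum _ (fun i _ => integrable_finset_sum _ (fun j _ => hintegrable i j))]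
  have : ∀ i : Fin l, (∫ z : Fin l → ℝ × EuclideanSpace ℝ (Fin d) × ℝ,
      ∑ j, RFF.F x (z i) * RFF.F y (z j)) = K / 2 := by
    intro i
    rw [integral_finset_sum _ (fun j _ => hintegrable i j)]
    simp_rw [hterm i]
    rw [Finset.sum_ite_eq Finset.univ i (fun _ => K / 2)]
    simp
  simp_rw [this]
  rw [Finset.sum_const, Finset.card_univ, Fintype.card_fin, nsmul_eq_mul]
  rw [hK]
  field_simp
end

section
/- Let (Ω, P) be a probability space, u : Ω → ℝ and v : Ω → ℝ^N square-integrable and centered (E[u] = 0, E[v] = 0), and let ε : Ω → ℝ^N be centered, independent of (u, v), with E[ε ε^T] = σ² I for some σ ≥ 0. Let c ∈ ℝ^N with c_n = E[u v_n], let B ∈ ℝ^{N×N} with B_{nm} = E[v_n v_m], and suppose M = B + σ² I is invertible. Fix Y ∈ ℝ^N and define the pathwise update w = u + c^T M^{-1} (Y − v − ε). Then E[w] = c^T M^{-1} Y and Var(w) = E[u²] − c^T M^{-1} c; i.e. the updated sample has exactly the Gaussian-process predictive mean and predictive variance. -/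
open scoped BigOperators Matrix
open MeasureTheory ProbabilityTheory

private lemma l2_mul_integrable {Ω : Type*} [MeasurableSpace Ω] {P : Measure Ω}
    {f g : Ω → ℝ} (hf : MemLp f 2 P) (hg : MemLp g 2 P) :
    Integrable (fun ω => f ω * g ω) P := by
  have h : MemLp (f • g) 1 P := hg.smul hf (r := 1)
    (hpqr := ⟨by rw [inv_one]; exact ENNReal.inv_two_add_inv_two⟩)
  exact memLp_one_iff_integrable.mp h

/-- moment matching of pathwise (Matheron-style) GP posterior
sampling. If `u, v` are square-integrable and centered, `ε` is centered noise
independent of `(u, v)` with `E[ε εᵀ] = σ² I`, `c_n = E[u v_n]`,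
`B_{nm} = E[v_n v_m]`, and `M = B + σ² I` is invertible, then the pathwise update
`w = u + cᵀ M⁻¹ (Y − v − ε)` satisfies `E[w] = cᵀ M⁻¹ Y` and
`Var(w) = E[u²] − cᵀ M⁻¹ c`. -/
theorem pathwise_update_moments
    {Ω : Type*} [MeasurableSpace Ω] (P : Measure Ω) [IsProbabilityMeasure P]
    {N : ℕ} (u : Ω → ℝ) (v ε : Ω → Fin N → ℝ) (σ : ℝ) (hσ : 0 ≤ σ)
    (Y : Fin N → ℝ)
    (hu2 : MemLp u 2 P)
    (hv2 : ∀ n, MemLp (fun ω => v ω n) 2 P)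
    (hε2 : ∀ n, MemLp (fun ω => ε ω n) 2 P)
    (hu0 : ∫ ω, u ω ∂P = 0)
    (hv0 : ∀ n, ∫ ω, v ω n ∂P = 0)
    (hε0 : ∀ n, ∫ ω, ε ω n ∂P = 0)
    (hindep : IndepFun ε (fun ω => (u ω, v ω)) P)
    (hεcov : ∀ n m, ∫ ω, ε ω n * ε ω m ∂P = if n = m then σ ^ 2 else 0) :
    let c : Fin N → ℝ := fun n => ∫ ω, u ω * v ω n ∂P
    let Bmat : Matrix (Fin N) (Fin N) ℝ := fun n m => ∫ ω, v ω n * v ω m ∂P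
    let M : Matrix (Fin N) (Fin N) ℝ := Bmat + σ ^ 2 • (1 : Matrix (Fin N) (Fin N) ℝ)
    ∀ _hM : IsUnit M.det,
    let w : Ω → ℝ := fun ω => u ω + c ⬝ᵥ M⁻¹.mulVec (fun n => Y n - v ω n - ε ω n)
    (∫ ω, w ω ∂P = c ⬝ᵥ M⁻¹.mulVec Y) ∧
    (variance w P = (∫ ω, (u ω) ^ 2 ∂P) - c ⬝ᵥ M⁻¹.mulVec c) := by
  intro c Bmat M hM w
  classical
  set a : Fin N → ℝ := M⁻¹.vecMul c with ha
  have hMdef : ∀ n m, M n m = (∫ ω, v ω n * v ω m ∂P) + σ ^ 2 * (if n = m then 1 else 0) := by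
    intro n m
    show Bmat n m + (σ ^ 2 • (1 : Matrix (Fin N) (Fin N) ℝ)) n m = _
    rw [Matrix.smul_apply, Matrix.one_apply, smul_eq_mul]
  -- basic integrability
  have huI : Integrable u P := hu2.integrable one_le_two
  have hvI : ∀ n, Integrable (fun ω => v ω n) P := fun n => (hv2 n).integrable one_le_two
  have hεI : ∀ n, Integrable (fun ω => ε ω n) P := fun n => (hε2 n).integrable one_le_two
  -- independence componentwise
  have hεu : ∀ n, IndepFun (fun ω => ε ω n) u P := fun n =>
    hindep.comp (measurable_pi_apply n) measurable_fst
  have hεv : ∀ n m, IndepFun (fun ω => ε ω n) (fun ω => v ω m) P := fun n m =>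
    hindep.comp (measurable_pi_apply n) ((measurable_pi_apply m).comp measurable_snd)
  have hIuε : ∀ n, ∫ ω, u ω * ε ω n ∂P = 0 := by
    intro n
    have h := (hεu n).integral_mul_eq_mul_integral (hε2 n).aestronglyMeasurable hu2.aestronglyMeasurable
    simp only [Pi.mul_apply] at h
    calc ∫ ω, u ω * ε ω n ∂P = ∫ ω, ε ω n * u ω ∂P := by simp_rw [mul_comm]
    _ = (∫ ω, ε ω n ∂P) * ∫ ω, u ω ∂P := h
    _ = 0 := by rw [hε0 n]; ring
  have hIvε : ∀ n m, ∫ ω, v ω n * ε ω m ∂P = 0 := by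
    intro n m
    have h := (hεv m n).integral_mul_eq_mul_integral (hε2 m).aestronglyMeasurable (hv2 n).aestronglyMeasurable
    simp only [Pi.mul_apply] at h
    calc ∫ ω, v ω n * ε ω m ∂P = ∫ ω, ε ω m * v ω n ∂P := by simp_rw [mul_comm]
    _ = (∫ ω, ε ω m ∂P) * ∫ ω, v ω n ∂P := h
    _ = 0 := by rw [hε0 m]; ring
  -- w as explicit sum
  have hwa : ∀ ω, w ω = u ω + ∑ n, a n * (Y n - v ω n - ε ω n) := by
    intro ω
    show u ω + c ⬝ᵥ M⁻¹.mulVec (fun n => Y n - v ω n - ε ω n) = _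
    rw [Matrix.dotProduct_mulVec, ← ha]
    rfl
  -- mean
  have iY : ∀ n : Fin N, Integrable (fun _ : Ω => Y n) P := fun n => integrable_const _
  have iYv : ∀ n, Integrable (fun ω => Y n - v ω n) P := fun n => (iY n).sub (hvI n)
  have iYvε : ∀ n, Integrable (fun ω => Y n - v ω n - ε ω n) P := fun n => (iYv n).sub (hεI n)
  have ivε : ∀ n, Integrable (fun ω => v ω n + ε ω n) P := fun n => (hvI n).add (hεI n)
  have iavε : ∀ n, Integrable (fun ω => a n * (v ω n + ε ω n)) P := fun n =>
    (ivε n).const_mul _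
  have hsum_int : ∀ n, Integrable (fun ω => a n * (Y n - v ω n - ε ω n)) P := fun n =>
    (iYvε n).const_mul _
  have hmean : ∫ ω, w ω ∂P = a ⬝ᵥ Y := by
    rw [integral_congr_ae (Filter.Eventually.of_forall hwa),
      integral_add huI (integrable_finset_sum _ fun n _ => hsum_int n), hu0,
      integral_finset_sum _ fun n _ => hsum_int n]
    have h1 : ∀ n : Fin N, ∫ ω, a n * (Y n - v ω n - ε ω n) ∂P = a n * Y n := by
      intro n
      rw [integral_const_mul, integral_sub (iYv n) (hεI n),
        integral_sub (iY n) (hvI n), hv0 n, hε0 n, integral_const]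
      simp
    rw [Finset.sum_congr rfl fun n _ => h1 n]
    simp [dotProduct]
  have hdotY : c ⬝ᵥ M⁻¹.mulVec Y = a ⬝ᵥ Y := by rw [ha, Matrix.dotProduct_mulVec]
  refine ⟨by rw [hmean, hdotY], ?_⟩
  -- variance
  set k : ℝ := a ⬝ᵥ Y with hk
  set s : Ω → ℝ := fun ω => u ω - ∑ n, a n * (v ω n + ε ω n) with hs
  have hws : ∀ ω, w ω = s ω + k := by
    intro ω
    rw [hwa]
    show _ = (u ω - ∑ n, a n * (v ω n + ε ω n)) + a ⬝ᵥ Y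
    have h1 : ∀ n : Fin N, a n * (Y n - v ω n - ε ω n)
        = a n * Y n - a n * (v ω n + ε ω n) := fun n => by ring
    rw [Finset.sum_congr rfl fun n _ => h1 n, Finset.sum_sub_distrib]
    show _ = _ - _ + ∑ n, a n * Y n
    ring
  have hT2 : MemLp (fun ω => ∑ n, a n * (v ω n + ε ω n)) 2 P :=
    memLp_finset_sum _ (fun n _ => ((hv2 n).add (hε2 n)).const_mul (a n))
  have hs2 : MemLp s 2 P := hu2.sub hT2
  have hw2 : MemLp w 2 P := by
    rw [show w = fun ω => s ω + k from funext hws]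
    exact hs2.add (memLp_const k)
  have hTI : Integrable (fun ω => ∑ n, a n * (v ω n + ε ω n)) P :=
    integrable_finset_sum _ fun n _ => iavε n
  have hsI : Integrable s P := huI.sub hTI
  have hs0 : ∫ ω, s ω ∂P = 0 := by
    have : ∀ ω, s ω = u ω - ∑ n, a n * (v ω n + ε ω n) := fun ω => rfl
    rw [integral_congr_ae (Filter.Eventually.of_forall this), integral_sub huI hTI, hu0,
      integral_finset_sum _ fun n _ => iavε n]
    have h1 : ∀ n : Fin N, ∫ ω, a n * (v ω n + ε ω n) ∂P = 0 := by
      intro n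
      rw [integral_const_mul, integral_add (hvI n) (hεI n), hv0 n, hε0 n]
      ring
    rw [Finset.sum_congr rfl fun n _ => h1 n]
    simp
  -- component integrals
  have hIvv : ∀ n m, ∫ ω, (v ω n + ε ω n) * (v ω m + ε ω m) ∂P = M n m := by
    intro n m
    have e : ∀ ω, (v ω n + ε ω n) * (v ω m + ε ω m)
        = v ω n * v ω m + v ω n * ε ω m + ε ω n * v ω m + ε ω n * ε ω m := fun ω => by ring
    rw [integral_congr_ae (Filter.Eventually.of_forall e)]
    have i1 : Integrable (fun ω => v ω n * v ω m) P := l2_mul_integrable (hv2 n) (hv2 m)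
    have i2 : Integrable (fun ω => v ω n * ε ω m) P := l2_mul_integrable (hv2 n) (hε2 m)
    have i3 : Integrable (fun ω => ε ω n * v ω m) P := l2_mul_integrable (hε2 n) (hv2 m)
    have i4 : Integrable (fun ω => ε ω n * ε ω m) P := l2_mul_integrable (hε2 n) (hε2 m)
    have i12 : Integrable (fun ω => v ω n * v ω m + v ω n * ε ω m) P := i1.add i2
    have i123 : Integrable (fun ω => v ω n * v ω m + v ω n * ε ω m + ε ω n * v ω m) P :=
      i12.add i3
    rw [integral_add i123 i4, integral_add i12 i3, integral_add i1 i2,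
      hIvε n m, hεcov n m]
    have h3 : ∫ ω, ε ω n * v ω m ∂P = 0 := by
      have h : ∫ ω, ε ω n * v ω m ∂P = (∫ ω, ε ω n ∂P) * ∫ ω, v ω m ∂P :=
        (hεv n m).integral_mul_eq_mul_integral (hε2 n).aestronglyMeasurable (hv2 m).aestronglyMeasurable
      rw [h, hε0 n]; ring
    rw [h3, hMdef n m]
    by_cases hnm : n = m <;> simp [hnm]
  have hIut : ∀ n, ∫ ω, u ω * (v ω n + ε ω n) ∂P = c n := by
    intro n
    have e : ∀ ω, u ω * (v ω n + ε ω n) = u ω * v ω n + u ω * ε ω n := fun ω => by ring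
    rw [integral_congr_ae (Filter.Eventually.of_forall e),
      integral_add (l2_mul_integrable hu2 (hv2 n)) (l2_mul_integrable hu2 (hε2 n)),
      hIuε n, add_zero]
  -- ∫ s^2
  have husq : Integrable (fun ω => u ω ^ 2) P := hu2.integrable_sq
  have huvεint : ∀ n, Integrable (fun ω => a n * (u ω * (v ω n + ε ω n))) P := fun n =>
    (l2_mul_integrable hu2 ((hv2 n).add (hε2 n))).const_mul _
  have hvεint : ∀ n m, Integrable
      (fun ω => (a n * a m) * ((v ω n + ε ω n) * (v ω m + ε ω m))) P := fun n m =>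
    (l2_mul_integrable ((hv2 n).add (hε2 n)) ((hv2 m).add (hε2 m))).const_mul _
  have hssq : ∫ ω, s ω ^ 2 ∂P
      = (∫ ω, u ω ^ 2 ∂P) - 2 * (a ⬝ᵥ c) + a ⬝ᵥ M.mulVec a := by
    have e : ∀ ω, s ω ^ 2 = u ω ^ 2 - 2 * (∑ n, a n * (u ω * (v ω n + ε ω n)))
        + ∑ n, ∑ m, (a n * a m) * ((v ω n + ε ω n) * (v ω m + ε ω m)) := by
      intro ω
      have h1 : u ω * (∑ n, a n * (v ω n + ε ω n))
          = ∑ n, a n * (u ω * (v ω n + ε ω n)) := by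
        rw [Finset.mul_sum]; exact Finset.sum_congr rfl fun n _ => by ring
      have h2 : (∑ n, a n * (v ω n + ε ω n)) ^ 2
          = ∑ n, ∑ m, (a n * a m) * ((v ω n + ε ω n) * (v ω m + ε ω m)) := by
        rw [sq, Finset.sum_mul_sum]
        exact Finset.sum_congr rfl fun n _ => Finset.sum_congr rfl fun m _ => by ring
      calc s ω ^ 2 = u ω ^ 2 - 2 * (u ω * (∑ n, a n * (v ω n + ε ω n)))
            + (∑ n, a n * (v ω n + ε ω n)) ^ 2 := by rw [hs]; ring
      _ = _ := by rw [h1, h2]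
    have iB : Integrable (fun ω => 2 * (∑ n, a n * (u ω * (v ω n + ε ω n)))) P :=
      (integrable_finset_sum _ fun n _ => huvεint n).const_mul 2
    have iC : Integrable
        (fun ω => ∑ n, ∑ m, (a n * a m) * ((v ω n + ε ω n) * (v ω m + ε ω m))) P :=
      integrable_finset_sum _ fun n _ => integrable_finset_sum _ fun m _ => hvεint n m
    have iAB : Integrable (fun ω => u ω ^ 2
        - 2 * (∑ n, a n * (u ω * (v ω n + ε ω n)))) P := husq.sub iB
    rw [integral_congr_ae (Filter.Eventually.of_forall e),
      integral_add iAB iC, integral_sub husq iB]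
    congr 1
    · congr 1
      rw [integral_const_mul, integral_finset_sum _ fun n _ => huvεint n]
      have h1 : ∀ n : Fin N, ∫ ω, a n * (u ω * (v ω n + ε ω n)) ∂P = a n * c n := by
        intro n
        rw [integral_const_mul, hIut n]
      rw [Finset.sum_congr rfl fun n _ => h1 n]
      rfl
    · rw [integral_finset_sum _ fun n _ => integrable_finset_sum _ fun m _ => hvεint n m]
      have h1 : ∀ n : Fin N, ∫ ω, ∑ m, (a n * a m) * ((v ω n + ε ω n) * (v ω m + ε ω m)) ∂P
          = ∑ m, (a n * a m) * M n m := by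
        intro n
        rw [integral_finset_sum _ fun m _ => hvεint n m]
        exact Finset.sum_congr rfl fun m _ => by rw [integral_const_mul, hIvv n m]
      rw [Finset.sum_congr rfl fun n _ => h1 n]
      simp only [dotProduct, Matrix.mulVec, Finset.mul_sum]
      exact Finset.sum_congr rfl fun n _ => Finset.sum_congr rfl fun m _ => by ring
  -- algebraic identities
  have haMa : a ⬝ᵥ M.mulVec a = a ⬝ᵥ c := by
    rw [Matrix.dotProduct_mulVec, ha, Matrix.vecMul_vecMul, Matrix.nonsing_inv_mul M hM,
      Matrix.vecMul_one, dotProduct_comm]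
  have hac : c ⬝ᵥ M⁻¹.mulVec c = a ⬝ᵥ c := by rw [ha, Matrix.dotProduct_mulVec]
  -- conclude
  have hvar := variance_eq_sub hw2
  have hwsq : ∫ ω, w ω ^ 2 ∂P = (∫ ω, s ω ^ 2 ∂P) + k ^ 2 := by
    have e : ∀ ω, w ω ^ 2 = s ω ^ 2 + (2 * k) * s ω + k ^ 2 := fun ω => by rw [hws ω]; ring
    have iS1 : Integrable (fun ω => 2 * k * s ω) P := hsI.const_mul (2 * k)
    have iS2 : Integrable (fun ω => s ω ^ 2 + 2 * k * s ω) P := hs2.integrable_sq.add iS1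
    rw [integral_congr_ae (Filter.Eventually.of_forall e),
      integral_add iS2 (integrable_const _),
      integral_add hs2.integrable_sq iS1, integral_const_mul, hs0,
      integral_const]
    simp
  rw [hvar]
  simp only [Pi.pow_apply]
  rw [hwsq, hssq, hmean, haMa, hac]
  ring
end

section
/- Let W_1, W_2, … be i.i.d. integrable real random variables with W_1 > 0 almost surely, and suppose log((1/N)·Σ_{n=1}^N W_n) and log((1/(N+1))·Σ_{n=1}^{N+1} W_n) are integrable. Then E[log((1/N)·Σ_{n=1}^N W_n)] ≤ E[log((1/(N+1))·Σ_{n=1}^{N+1} W_n)]; i.e. the Monte Carlo log-average objective is monotonically nondecreasing in the number N of samples. -/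
open scoped BigOperators
open MeasureTheory ProbabilityTheory

/-- Precomposing an independent family with an injective index map preserves
independence. -/
lemma iIndepFun_precomp_aux
    {Ω : Type*} [MeasurableSpace Ω] {P : Measure Ω} [IsProbabilityMeasure P]
    {W : ℕ → Ω → ℝ}
    (hindep : iIndepFun W P)
    {M : ℕ} [Nonempty (Fin M)] {σ : Fin M → ℕ} (hσ : Function.Injective σ) :
    iIndepFun
      (fun i => W (σ i)) P := by
  rw [iIndepFun_iff_measure_inter_preimage_eq_mul]
  intro S sets hsets
  have hτσ : ∀ i, Function.invFun σ (σ i) = i := Function.leftInverse_invFun hσ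
  have key := hindep.measure_inter_preimage_eq_mul (S.image σ)
    (sets := fun j => sets (Function.invFun σ j)) ?_
  · rw [Finset.set_biInter_finset_image, Finset.prod_image
      (fun a _ b _ h => hσ h)] at key
    simpa [hτσ] using key
  · intro j hj
    rcases Finset.mem_image.1 hj with ⟨i, hi, rfl⟩
    simpa [hτσ] using hsets i hi

/-- The joint law of an injectively-reindexed iid family is the product of the
common marginal. -/
lemma law_vec_aux
    {Ω : Type*} [MeasurableSpace Ω] {P : Measure Ω} [IsProbabilityMeasure P]
    {W : ℕ → Ω → ℝ} (hmeas : ∀ i, Measurable (W i))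
    (hindep : iIndepFun W P)
    (hident : ∀ i, Measure.map (W i) P = Measure.map (W 0) P)
    {M : ℕ} [Nonempty (Fin M)] {σ : Fin M → ℕ} (hσ : Function.Injective σ) :
    Measure.map (fun ω (i : Fin M) => W (σ i) ω) P
      = Measure.pi (fun _ : Fin M => Measure.map (W 0) P) := by
  have hμ : IsProbabilityMeasure (Measure.map (W 0) P) :=
    Measure.isProbabilityMeasure_map (hmeas 0).aemeasurable
  have hV : Measurable (fun ω (i : Fin M) => W (σ i) ω) :=
    measurable_pi_lambda _ (fun i => hmeas (σ i))
  refine (Measure.pi_eq fun s hs => ?_).symm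
  rw [Measure.map_apply hV (MeasurableSet.univ_pi hs)]
  have hpre : (fun ω (i : Fin M) => W (σ i) ω) ⁻¹' (Set.univ.pi s)
      = ⋂ i, W (σ i) ⁻¹' s i := by
    ext ω; simp [Set.mem_pi]
  rw [hpre, (iIndepFun_precomp_aux hindep hσ).meas_iInter
    (fun i => ⟨s i, hs i, rfl⟩)]
  refine Finset.prod_congr rfl fun i _ => ?_
  rw [← Measure.map_apply (hmeas (σ i)) (hs i), hident (σ i)]

/-- monotonicity of the Monte Carlo log-average objective in the
number of samples. For an i.i.d. sequence `W_1, W_2, …` of integrable, a.s.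
positive random variables, `E[log((1/N) Σ_{n<N} W_n)] ≤
E[log((1/(N+1)) Σ_{n<N+1} W_n)]` whenever both log-averages are integrable. -/
theorem log_average_monotone_in_samples
    {Ω : Type*} [MeasurableSpace Ω] (P : Measure Ω) [IsProbabilityMeasure P]
    (W : ℕ → Ω → ℝ)
    (hmeas : ∀ i, Measurable (W i))
    (hindep : iIndepFun W P)
    (hident : ∀ i, Measure.map (W i) P = Measure.map (W 0) P)
    (hint : ∀ i, Integrable (W i) P)
    (hpos : ∀ i, ∀ᵐ ω ∂P, 0 < W i ω)
    (N : ℕ) (hN : 0 < N)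
    (hlogN : Integrable
      (fun ω => Real.log ((N : ℝ)⁻¹ * ∑ n ∈ Finset.range N, W n ω)) P)
    (hlogN1 : Integrable
      (fun ω => Real.log (((N : ℝ) + 1)⁻¹ * ∑ n ∈ Finset.range (N + 1), W n ω)) P) :
    ∫ ω, Real.log ((N : ℝ)⁻¹ * ∑ n ∈ Finset.range N, W n ω) ∂P
      ≤ ∫ ω, Real.log (((N : ℝ) + 1)⁻¹ * ∑ n ∈ Finset.range (N + 1), W n ω) ∂P := by
  classical
  have hNE : Nonempty (Fin N) := ⟨⟨0, hN⟩⟩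
  set μ := Measure.map (W 0) P with hμdef
  have hμ : IsProbabilityMeasure μ := Measure.isProbabilityMeasure_map (hmeas 0).aemeasurable
  set g : (Fin N → ℝ) → ℝ := fun x => Real.log ((N : ℝ)⁻¹ * ∑ i, x i) with hg
  have hgm : Measurable g := Real.measurable_log.comp
    (measurable_const.mul (Finset.univ.measurable_sum fun i _ => measurable_pi_apply i))
  -- key facts for any injective reindexing
  have key : ∀ σ : Fin N → ℕ, Function.Injective σ →
      (∫ ω, g (fun i => W (σ i) ω) ∂P = ∫ x, g x ∂(Measure.pi fun _ : Fin N => μ)) ∧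
      (Integrable (fun ω => g (fun i => W (σ i) ω)) P ↔
        Integrable g (Measure.pi fun _ : Fin N => μ)) := by
    intro σ hσ
    have hV : Measurable (fun ω (i : Fin N) => W (σ i) ω) :=
      measurable_pi_lambda _ (fun i => hmeas (σ i))
    have hlaw := law_vec_aux hmeas hindep hident hσ
    constructor
    · rw [← hμdef] at hlaw
      rw [← hlaw, integral_map hV.aemeasurable hgm.aestronglyMeasurable]
    · rw [← hμdef] at hlaw
      rw [← hlaw, integrable_map_measure hgm.aestronglyMeasurable hV.aemeasurable]
      exact Iff.rfl
  -- the base case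
  have hbase : (fun ω => Real.log ((N : ℝ)⁻¹ * ∑ n ∈ Finset.range N, W n ω))
      = fun ω => g (fun i : Fin N => W (i : ℕ) ω) := by
    funext ω; simp [hg, Finset.sum_range]
  have hvalinj : Function.Injective (fun i : Fin N => (i : ℕ)) := Fin.val_injective
  have hgint : Integrable g (Measure.pi fun _ : Fin N => μ) :=
    ((key _ hvalinj).2).1 (by rw [← hbase]; exact hlogN)
  have hbase_int : ∫ ω, Real.log ((N : ℝ)⁻¹ * ∑ n ∈ Finset.range N, W n ω) ∂P
      = ∫ x, g x ∂(Measure.pi fun _ : Fin N => μ) := by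
    rw [hbase]; exact (key _ hvalinj).1
  -- the leave-one-out averages
  set S : Fin (N + 1) → Ω → ℝ :=
    fun k ω => g (fun i => W ((k.succAbove i : Fin (N + 1)) : ℕ) ω) with hS
  have hσinj : ∀ k : Fin (N + 1),
      Function.Injective (fun i : Fin N => ((k.succAbove i : Fin (N + 1)) : ℕ)) :=
    fun k => Fin.val_injective.comp (Fin.succAbove_right_injective)
  have hSint : ∀ k, Integrable (S k) P := fun k => ((key _ (hσinj k)).2).2 hgint
  have hSeq : ∀ k, ∫ ω, S k ω ∂P = ∫ x, g x ∂(Measure.pi fun _ : Fin N => μ) :=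
    fun k => (key _ (hσinj k)).1
  -- a.e. pointwise Jensen inequality
  have hae : ∀ᵐ ω ∂P, ((N : ℝ) + 1)⁻¹ * ∑ k : Fin (N + 1), S k ω
      ≤ Real.log (((N : ℝ) + 1)⁻¹ * ∑ n ∈ Finset.range (N + 1), W n ω) := by
    filter_upwards [ae_all_iff.2 hpos] with ω hω
    set T : ℝ := ∑ n ∈ Finset.range (N + 1), W n ω with hT
    have hTfin : T = ∑ j : Fin (N + 1), W (j : ℕ) ω := by
      rw [hT, Finset.sum_range]
    set p : Fin (N + 1) → ℝ :=
      fun k => (N : ℝ)⁻¹ * ∑ i : Fin N, W ((k.succAbove i : Fin (N + 1)) : ℕ) ω with hp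
    have hppos : ∀ k, 0 < p k := by
      intro k
      exact mul_pos (by positivity)
        (Finset.sum_pos (fun i _ => hω _) Finset.univ_nonempty)
    have hpsum : ∑ k : Fin (N + 1), p k = T := by
      have h1 : ∀ k : Fin (N + 1),
          ∑ i : Fin N, W ((k.succAbove i : Fin (N + 1)) : ℕ) ω
            = (∑ j : Fin (N + 1), W (j : ℕ) ω) - W (k : ℕ) ω := by
        intro k
        rw [Fin.sum_univ_succAbove (fun j : Fin (N + 1) => W (j : ℕ) ω) k]
        ring
      simp_rw [hp, h1, ← Finset.mul_sum, Finset.sum_sub_distrib, Finset.sum_const,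
        Finset.card_univ, Fintype.card_fin]
      rw [← hTfin]
      field_simp
      ring
    have hjensen := (strictConcaveOn_log_Ioi.concaveOn).le_map_sum
      (t := Finset.univ) (w := fun _ : Fin (N + 1) => ((N : ℝ) + 1)⁻¹) (p := p)
      (fun _ _ => by positivity)
      (by simp [Finset.card_univ]; field_simp)
      (fun k _ => hppos k)
    have hsum_eq : ∑ k : Fin (N + 1), ((N : ℝ) + 1)⁻¹ • p k
        = ((N : ℝ) + 1)⁻¹ * T := by
      rw [← Finset.smul_sum, hpsum]; simp [smul_eq_mul]
    calc ((N : ℝ) + 1)⁻¹ * ∑ k : Fin (N + 1), S k ω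
        = ∑ k : Fin (N + 1), ((N : ℝ) + 1)⁻¹ • Real.log (p k) := by
          rw [Finset.mul_sum]
          refine Finset.sum_congr rfl fun k _ => ?_
          simp [hS, hg, hp, smul_eq_mul]
      _ ≤ Real.log (∑ k : Fin (N + 1), ((N : ℝ) + 1)⁻¹ • p k) := hjensen
      _ = Real.log (((N : ℝ) + 1)⁻¹ * T) := by rw [hsum_eq]
  -- put it together
  have hsumint : Integrable (fun ω => ((N : ℝ) + 1)⁻¹ * ∑ k : Fin (N + 1), S k ω) P :=
    (integrable_finset_sum _ (fun k _ => hSint k)).const_mul _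
  have hle := integral_mono_ae hsumint hlogN1 hae
  have hcalc : ∫ ω, ((N : ℝ) + 1)⁻¹ * ∑ k : Fin (N + 1), S k ω ∂P
      = ∫ x, g x ∂(Measure.pi fun _ : Fin N => μ) := by
    rw [integral_const_mul, integral_finset_sum _ (fun k _ => hSint k)]
    simp_rw [hSeq]
    rw [Finset.sum_const, Finset.card_univ, Fintype.card_fin, nsmul_eq_mul]
    push_cast
    field_simp
  rw [hbase_int, ← hcalc]
  exact hle
end

section
/- Let Q ≥ 1, let p = (p_1,…,p_Q) with p_q > 0 and Σ_q p_q = 1, and let U_1,…,U_Q be i.i.d. random variables uniformly distributed on (0,1). Define the standard Gumbel variables G_q = −log(−log U_q). Then for every index j ∈ {1,…,Q}, P(log p_j + G_j > log p_q + G_q for all q ≠ j) = p_j; i.e. the argmax of the Gumbel-perturbed log-probabilities has exactly the categorical distribution with parameter p. -/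
open scoped BigOperators
open MeasureTheory

lemma gumbel_aux {pq pj x t : ℝ} (hpq : 0 < pq) (hpj : 0 < pj)
    (hx : x ∈ Set.Ioo (0:ℝ) 1) (ht : t ∈ Set.Ioo (0:ℝ) 1) :
    Real.log pq + -Real.log (-Real.log x) < Real.log pj + -Real.log (-Real.log t)
      ↔ x < t ^ (pq / pj) := by
  have ha : 0 < -Real.log x := by have := Real.log_neg hx.1 hx.2; linarith
  have hb : 0 < -Real.log t := by have := Real.log_neg ht.1 ht.2; linarith
  rw [Real.rpow_def_of_pos ht.1, ← Real.log_lt_iff_lt_exp hx.1]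
  have h1 : (Real.log pq + -Real.log (-Real.log x) < Real.log pj + -Real.log (-Real.log t))
      ↔ Real.log pq + Real.log (-Real.log t) < Real.log pj + Real.log (-Real.log x) := by
    constructor <;> intro <;> linarith
  rw [h1, ← Real.log_mul hpq.ne' hb.ne', ← Real.log_mul hpj.ne' ha.ne',
    Real.log_lt_log_iff (mul_pos hpq hb) (mul_pos hpj ha),
    show Real.log t * (pq / pj) = (Real.log t * pq) / pj by ring, lt_div_iff₀ hpj]
  constructor <;> intro h <;> nlinarith

/-- the Gumbel-max identity. If `U_1,…,U_Q` are i.i.d. uniform on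
`(0,1)` and `G_q = −log(−log U_q)` are the corresponding standard Gumbel
variables, then for each `j`, the probability that `log p_j + G_j` strictly
exceeds `log p_q + G_q` for all `q ≠ j` equals `p_j`. -/
theorem gumbel_max_categorical
    {Ω : Type*} [MeasurableSpace Ω] (P : Measure Ω) [IsProbabilityMeasure P]
    (Q : ℕ) (hQ : 1 ≤ Q) (p : Fin Q → ℝ)
    (hp : ∀ q, 0 < p q) (hsum : ∑ q, p q = 1)
    (U : Fin Q → Ω → ℝ)
    (hmeas : ∀ q, Measurable (U q))
    (hU : Measure.map (fun ω => fun q : Fin Q => U q ω) P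
      = Measure.pi (fun _ : Fin Q =>
          (volume (Set.Ioo (0:ℝ) 1))⁻¹ • volume.restrict (Set.Ioo 0 1)))
    (G : Fin Q → Ω → ℝ)
    (hG : ∀ q ω, G q ω = -Real.log (-Real.log (U q ω)))
    (j : Fin Q) :
    P {ω | ∀ q, q ≠ j → Real.log (p q) + G q ω < Real.log (p j) + G j ω}
      = ENNReal.ofReal (p j) := by
  obtain ⟨n, rfl⟩ : ∃ n, Q = n + 1 := ⟨Q - 1, (Nat.succ_pred_eq_of_pos hQ).symm⟩
  set ν : Measure ℝ := volume.restrict (Set.Ioo 0 1) with hν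
  have hν1 : ν (Set.Ioo (0:ℝ) 1) = 1 := by
    rw [hν, Measure.restrict_apply measurableSet_Ioo]
    simp [Real.volume_Ioo]
  haveI : IsProbabilityMeasure ν := ⟨by
    rw [hν, Measure.restrict_apply MeasurableSet.univ]
    simp [Real.volume_Ioo]⟩
  have hUmap : Measure.map (fun ω => fun q : Fin (n+1) => U q ω) P
      = Measure.pi (fun _ : Fin (n+1) => ν) := by
    rw [hU]; congr 1; funext _; simp [hν, Real.volume_Ioo]
  -- the target set in the product space
  set A : Set (Fin (n+1) → ℝ) :=
    {u | ∀ q, q ≠ j → Real.log (p q) + -Real.log (-Real.log (u q))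
          < Real.log (p j) + -Real.log (-Real.log (u j))} with hAdef
  have hfm : ∀ q : Fin (n+1), Measurable fun u : Fin (n+1) → ℝ =>
      Real.log (p q) + -Real.log (-Real.log (u q)) := fun q =>
    measurable_const.add
      ((Real.measurable_log.comp (Real.measurable_log.comp (measurable_pi_apply q)).neg).neg)
  have hA : MeasurableSet A := by
    have : A = ⋂ q, ⋂ _ : q ≠ j,
        {u : Fin (n+1) → ℝ | Real.log (p q) + -Real.log (-Real.log (u q))
          < Real.log (p j) + -Real.log (-Real.log (u j))} := by
      ext u; simp [hAdef, Set.mem_iInter]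
    rw [this]
    exact MeasurableSet.iInter fun q => MeasurableSet.iInter fun _ =>
      measurableSet_lt (hfm q) (hfm j)
  have hprei : {ω | ∀ q, q ≠ j → Real.log (p q) + G q ω < Real.log (p j) + G j ω}
      = (fun ω => fun q : Fin (n+1) => U q ω) ⁻¹' A := by
    ext ω; simp [hAdef, hG]
  have hmeas' : Measurable fun ω => fun q : Fin (n+1) => U q ω :=
    measurable_pi_lambda _ fun q => hmeas q
  rw [hprei, ← Measure.map_apply hmeas' hA, hUmap]
  -- decompose the product measure at coordinate j
  have hmp := measurePreserving_piFinSuccAbove (fun _ : Fin (n+1) => ν) j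
  set e := MeasurableEquiv.piFinSuccAbove (fun _ : Fin (n+1) => ℝ) j with he
  set s : Set (ℝ × (Fin n → ℝ)) := e.symm ⁻¹' A with hsdef
  have hs : MeasurableSet s := e.symm.measurable hA
  have hAeq : (Measure.pi fun _ : Fin (n+1) => ν) A
      = (ν.prod (Measure.pi fun _ : Fin n => ν)) s := by
    rw [← hmp.map_eq, MeasurableEquiv.map_apply]
    congr 1
    ext u
    simp [hsdef]
  rw [hAeq, Measure.prod_apply hs]
  -- the slice
  set c : ℝ := (1 - p j) / p j with hc
  have hpj := hp j
  have hpj1 : p j ≤ 1 := by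
    rw [← hsum]
    exact Finset.single_le_sum (fun q _ => (hp q).le) (Finset.mem_univ j)
  have hc0 : 0 ≤ c := div_nonneg (by linarith) hpj.le
  have hslice : ∀ t ∈ Set.Ioo (0:ℝ) 1,
      (Measure.pi fun _ : Fin n => ν) (Prod.mk t ⁻¹' s) = ENNReal.ofReal (t ^ c) := by
    intro t ht
    have hset : Prod.mk t ⁻¹' s
        = Set.pi Set.univ (fun k : Fin n =>
            {x : ℝ | Real.log (p (j.succAbove k)) + -Real.log (-Real.log x)
              < Real.log (p j) + -Real.log (-Real.log t)}) := by
      ext v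
      simp only [hsdef, Set.mem_preimage, hAdef, Set.mem_setOf_eq, Set.mem_pi,
        Set.mem_univ, forall_true_left]
      have hsymm : e.symm (t, v) = j.insertNth t v := rfl
      constructor
      · intro h k
        have := h (j.succAbove k) (Fin.succAbove_ne j k)
        rwa [hsymm, Fin.insertNth_apply_succAbove, Fin.insertNth_apply_same] at this
      · intro h q hq
        obtain ⟨k, rfl⟩ := Fin.exists_succAbove_eq hq
        have := h k
        rwa [hsymm, Fin.insertNth_apply_succAbove, Fin.insertNth_apply_same]
    rw [hset, Measure.pi_pi]
    have hν' : ∀ k : Fin n,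
        ν {x : ℝ | Real.log (p (j.succAbove k)) + -Real.log (-Real.log x)
              < Real.log (p j) + -Real.log (-Real.log t)}
          = ENNReal.ofReal (t ^ (p (j.succAbove k) / p j)) := by
      intro k
      rw [hν, Measure.restrict_apply' measurableSet_Ioo]
      have : {x : ℝ | Real.log (p (j.succAbove k)) + -Real.log (-Real.log x)
              < Real.log (p j) + -Real.log (-Real.log t)} ∩ Set.Ioo 0 1
          = Set.Ioo 0 (t ^ (p (j.succAbove k) / p j)) := by
        ext x
        constructor
        · rintro ⟨hlt, hx⟩
          exact ⟨hx.1, (gumbel_aux (hp _) hpj hx ht).mp hlt⟩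
        · rintro ⟨hx0, hxlt⟩
          have htpow : t ^ (p (j.succAbove k) / p j) < 1 :=
            Real.rpow_lt_one ht.1.le ht.2 (div_pos (hp _) hpj)
          have hx : x ∈ Set.Ioo (0:ℝ) 1 := ⟨hx0, hxlt.trans htpow⟩
          exact ⟨(gumbel_aux (hp _) hpj hx ht).mpr hxlt, hx⟩
      rw [this, Real.volume_Ioo, sub_zero]
    simp_rw [hν']
    rw [← ENNReal.ofReal_prod_of_nonneg (fun k _ =>
      Real.rpow_nonneg ht.1.le _)]
    congr 1
    have hsum' : ∑ k : Fin n, p (j.succAbove k) / p j = c := by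
      rw [← Finset.sum_div, hc]
      have h := Fin.sum_univ_succAbove p j
      rw [hsum] at h
      congr 1
      linarith
    rw [← hsum', Real.rpow_def_of_pos ht.1, Finset.mul_sum, Real.exp_sum]
    exact Finset.prod_congr rfl fun k _ => Real.rpow_def_of_pos ht.1 _
  have hii : IntervalIntegrable (fun t : ℝ => t ^ c) volume 0 1 :=
    intervalIntegral.intervalIntegrable_rpow' (by linarith)
  have hint : IntegrableOn (fun t : ℝ => t ^ c) (Set.Ioo 0 1) volume :=
    ((intervalIntegrable_iff_integrableOn_Ioc_of_le (by norm_num : (0:ℝ) ≤ 1)).mp hii).mono_set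
      Set.Ioo_subset_Ioc_self
  have hval : ∫ t in Set.Ioo (0:ℝ) 1, t ^ c = p j := by
    rw [← MeasureTheory.integral_Ioc_eq_integral_Ioo,
      ← intervalIntegral.integral_of_le (by norm_num : (0:ℝ) ≤ 1),
      integral_rpow (Or.inl (by linarith : (-1:ℝ) < c)),
      Real.one_rpow, Real.zero_rpow (by positivity : c + 1 ≠ 0), hc]
    field_simp
    ring
  calc ∫⁻ t, (Measure.pi fun _ : Fin n => ν) (Prod.mk t ⁻¹' s) ∂ν
      = ∫⁻ t in Set.Ioo (0:ℝ) 1, ENNReal.ofReal (t ^ c) ∂volume :=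
        setLIntegral_congr_fun measurableSet_Ioo hslice
    _ = ENNReal.ofReal (∫ t in Set.Ioo (0:ℝ) 1, t ^ c) := by
        rw [← MeasureTheory.ofReal_integral_eq_lintegral_ofReal hint ?_]
        filter_upwards [ae_restrict_mem measurableSet_Ioo] with t ht
        exact Real.rpow_nonneg ht.1.le _
    _ = ENNReal.ofReal (p j) := by rw [hval]
end
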